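/- arXiv:1108.2022 — 2 statements merged into one kernel-verified Lean document; each statement's English description precedes it below -/
import Mathlib

section
/- Let U ⊆ ℝ³ be open with coordinates (x¹,x²,y³), write a* = ∂a/∂y³. Let φ, h₄ : U → ℝ be C², let Υ₂ : U → ℝ be C¹ in y³ and nowhere zero, and assume h₄ ≠ 0, h₄* ≠ 0 and ∂₃φ ≠ 0 everywhere. Define h₃ := (∂₃φ)·(∂₃h₄) / (2 Υ₂ h₄), and assume the generating-function relation e^{2φ}·|h₃ h₄| = (h₄*)² holds on U. Then h₃ is nowhere zero and on U: h₄** − (h₄*)²/(2h₄) − h₃* h₄*/(2h₃) = 2 h₃ h₄ Υ₂, i.e., the vertical Einstein equation −(1/(2h₃h₄))[h₄** − (h₄*)²/(2h₄) − h₃*h₄*/(2h₃)] = −Υ₂ is satisfied. -/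
/-!
Along each `y³`-line the definition of `h₃` gives `2Υ₂h₃h₄ = φ*h₄*`, so the generating relation,
squared to get rid of the absolute value, reads `e^{4φ}(φ*h₄*)² = 4Υ₂²(h₄*)⁴`. Its logarithmic
derivative `2φ* + φ**/φ* = Υ₂*/Υ₂ + h₄**/h₄*` turns the logarithmic derivative of
`h₃ = φ*h₄*/(2Υ₂h₄)` into `2h₄**/h₄* − 2φ* − h₄*/h₄`, and then the left-hand side of the vertical
equation collapses to `φ*h₄* = 2h₃h₄Υ₂`.
-/

noncomputable section

/-- Partial derivative `∂₃ = ∂/∂y³` on `ℝ³` (coordinates `(x¹,x²,y³)` indexed by `0,1,2`),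
taken as a derivative along the `y³` coordinate line; `pdy a = a*`. -/
def pdy (f : (Fin 3 → ℝ) → ℝ) (x : Fin 3 → ℝ) : ℝ :=
  deriv (fun t => f (Function.update x 2 t)) (x 2)

open Filter Topology Real

lemma logDeriv_exp_comp {g : ℝ → ℝ} {t : ℝ} (hg : DifferentiableAt ℝ g t) :
    logDeriv (fun s => exp (g s)) t = deriv g t := by
  simpa [Function.comp_def, Real.logDeriv_exp] using logDeriv_comp Real.differentiableAt_exp hg

lemma exp_four_mul_mul_sq_of_generating {p a b y h h₃ : ℝ} (hy : y ≠ 0) (hh : h ≠ 0)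
    (h₃_eq : h₃ = a * b / (2 * y * h)) (hgen : exp (2 * p) * |h₃ * h| = b ^ 2) :
    exp (4 * p) * (a * b) ^ 2 = 4 * y ^ 2 * b ^ 4 := by
  have hab : a * b = h₃ * h * (2 * y) := by rw [h₃_eq]; field_simp
  calc exp (4 * p) * (a * b) ^ 2 = 4 * y ^ 2 * (exp (2 * p) * |h₃ * h|) ^ 2 := by
        rw [hab, mul_pow (exp _), sq_abs, ← exp_nat_mul]; ring_nf
    _ = 4 * y ^ 2 * b ^ 4 := by rw [hgen]; ring

lemma logDeriv_generating_relation {Φ A B Y : ℝ → ℝ} {t : ℝ}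
    (hΦ : DifferentiableAt ℝ Φ t) (hA : DifferentiableAt ℝ A t) (hB : DifferentiableAt ℝ B t)
    (hY : DifferentiableAt ℝ Y t) (hA0 : A t ≠ 0) (hB0 : B t ≠ 0) (hY0 : Y t ≠ 0)
    (hrel : (fun s => exp (4 * Φ s) * (A s * B s) ^ 2) =ᶠ[𝓝 t] fun s => 4 * Y s ^ 2 * B s ^ 4) :
    2 * deriv Φ t + logDeriv A t = logDeriv Y t + logDeriv B t := by
  have h := (logDeriv_congr_nhds hrel).eq_of_nhds
  rw [logDeriv_mul (f := fun s => exp (4 * Φ s)) (g := fun s => (A s * B s) ^ 2) t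
      (exp_pos _).ne' (pow_ne_zero 2 (mul_ne_zero hA0 hB0)) (hΦ.const_mul 4).exp ((hA.mul hB).pow 2),
    logDeriv_exp_comp (hΦ.const_mul 4), deriv_const_mul 4 hΦ,
    logDeriv_fun_pow (f := fun s => A s * B s) (hA.mul hB), logDeriv_mul t hA0 hB0 hA hB,
    logDeriv_mul (f := fun s => 4 * Y s ^ 2) (g := fun s => B s ^ 4) t
      (mul_ne_zero four_ne_zero (pow_ne_zero 2 hY0)) (pow_ne_zero 4 hB0)
      ((hY.pow 2).const_mul 4) (hB.pow 4),
    logDeriv_const_mul t 4 four_ne_zero,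
    logDeriv_fun_pow hY, logDeriv_fun_pow hB] at h
  push_cast at h
  linarith

lemma logDeriv_mul_div_two_mul {A B Y H : ℝ → ℝ} {t : ℝ}
    (hA : DifferentiableAt ℝ A t) (hB : DifferentiableAt ℝ B t)
    (hY : DifferentiableAt ℝ Y t) (hH : DifferentiableAt ℝ H t)
    (hA0 : A t ≠ 0) (hB0 : B t ≠ 0) (hY0 : Y t ≠ 0) (hH0 : H t ≠ 0) :
    logDeriv (fun s => A s * B s / (2 * Y s * H s)) t
      = logDeriv A t + logDeriv B t - logDeriv Y t - logDeriv H t := by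
  rw [logDeriv_div (f := fun s => A s * B s) (g := fun s => 2 * Y s * H s) t
      (mul_ne_zero hA0 hB0) (by positivity) (hA.mul hB) ((hY.const_mul 2).mul hH),
    logDeriv_mul t hA0 hB0 hA hB,
    logDeriv_mul (f := fun s => 2 * Y s) t (mul_ne_zero two_ne_zero hY0) hH0 (hY.const_mul 2) hH,
    logDeriv_const_mul t 2 two_ne_zero]
  ring

lemma ContDiffAt.differentiableAt_deriv {f : ℝ → ℝ} {t : ℝ} (hf : ContDiffAt ℝ 2 f t) :
    DifferentiableAt ℝ (deriv f) t :=
  (hf.derivWithin (m := 1) (by norm_num)).differentiableAt one_ne_zero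

theorem vertical_equation_line {Φ H Y H₃ : ℝ → ℝ} {t : ℝ}
    (hΦ : ContDiffAt ℝ 2 Φ t) (hH : ContDiffAt ℝ 2 H t) (hY : DifferentiableAt ℝ Y t)
    (hY0 : ∀ᶠ s in 𝓝 t, Y s ≠ 0) (hH0 : ∀ᶠ s in 𝓝 t, H s ≠ 0)
    (hΦ'0 : deriv Φ t ≠ 0) (hH'0 : deriv H t ≠ 0)
    (hH₃ : ∀ s, H₃ s = deriv Φ s * deriv H s / (2 * Y s * H s))
    (hgen : ∀ᶠ s in 𝓝 t, exp (2 * Φ s) * |H₃ s * H s| = deriv H s ^ 2) :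
    deriv (deriv H) t - deriv H t ^ 2 / (2 * H t) - deriv H₃ t * deriv H t / (2 * H₃ t)
      = 2 * H₃ t * H t * Y t := by
  have hY0t := hY0.self_of_nhds
  have hH0t := hH0.self_of_nhds
  have hrel : (fun s => exp (4 * Φ s) * (deriv Φ s * deriv H s) ^ 2)
      =ᶠ[𝓝 t] fun s => 4 * Y s ^ 2 * deriv H s ^ 4 := by
    filter_upwards [hY0, hH0, hgen] with s hYs hHs hgens
    exact exp_four_mul_mul_sq_of_generating hYs hHs (hH₃ s) hgens
  have hlog := logDeriv_generating_relation (hΦ.differentiableAt two_ne_zero)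
    hΦ.differentiableAt_deriv hH.differentiableAt_deriv hY hΦ'0 hH'0 hY0t hrel
  have hlogH₃ : logDeriv H₃ t = 2 * logDeriv (deriv H) t - 2 * deriv Φ t - logDeriv H t := by
    rw [funext hH₃, logDeriv_mul_div_two_mul hΦ.differentiableAt_deriv
      hH.differentiableAt_deriv hY (hH.differentiableAt two_ne_zero) hΦ'0 hH'0 hY0t hH0t]
    linarith
  have hH₃0 : H₃ t ≠ 0 := by rw [hH₃]; positivity
  rw [← div_mul_cancel₀ (deriv H₃ t) hH₃0, ← logDeriv_apply, hlogH₃, hH₃ t]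
  simp only [logDeriv_apply]
  field_simp
  ring

section CoordinateLine

variable {ι : Type*} [DecidableEq ι] {U : Set (ι → ℝ)} {x : ι → ℝ}

lemma IsOpen.eventually_update_mem (hU : IsOpen U) (hx : x ∈ U) (i : ι) :
    ∀ᶠ t in 𝓝 (x i), Function.update x i t ∈ U := by
  have hcont : ContinuousAt (fun t => Function.update x i t) (x i) :=
    (continuous_const.update i continuous_id).continuousAt
  exact hcont.eventually_mem (by rw [Function.update_eq_self]; exact hU.mem_nhds hx)

lemma ContDiffOn.contDiffAt_update [Fintype ι] {n : WithTop ℕ∞} {f : (ι → ℝ) → ℝ}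
    (hf : ContDiffOn ℝ n f U) (hU : IsOpen U) (hx : x ∈ U) (i : ι) :
    ContDiffAt ℝ n (fun t => f (Function.update x i t)) (x i) := by
  have hfx : ContDiffAt ℝ n f (Function.update x i (x i)) := by
    rw [Function.update_eq_self]; exact hf.contDiffAt (hU.mem_nhds hx)
  exact hfx.comp (x i) (contDiff_update n x i).contDiffAt

end CoordinateLine

lemma pdy_update (f : (Fin 3 → ℝ) → ℝ) (x : Fin 3 → ℝ) (t : ℝ) :
    pdy f (Function.update x 2 t) = deriv (fun s => f (Function.update x 2 s)) t := by
  simp only [pdy, Function.update_idem, Function.update_self]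

lemma pdy_pdy (f : (Fin 3 → ℝ) → ℝ) (x : Fin 3 → ℝ) :
    pdy (pdy f) x = deriv (deriv fun s => f (Function.update x 2 s)) (x 2) := by
  change deriv (fun t => pdy f (Function.update x 2 t)) (x 2) = _
  simp only [pdy_update]

/-- General-source verification: with `h₃ := φ* h₄*/(2 Υ₂ h₄)` and the generating-function
relation `e^{2φ}|h₃h₄| = (h₄*)²`, the vertical Einstein equation
`−(1/(2h₃h₄))[h₄** − (h₄*)²/(2h₄) − h₃*h₄*/(2h₃)] = −Υ₂` holds identically. -/
theorem vertical_equation_general_source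
    (U : Set (Fin 3 → ℝ)) (hU : IsOpen U)
    (φ h₄ Υ₂ : (Fin 3 → ℝ) → ℝ)
    (hφ : ContDiffOn ℝ 2 φ U) (hh₄C : ContDiffOn ℝ 2 h₄ U)
    (hΥ : ∀ x ∈ U, ContDiffAt ℝ 1 (fun t => Υ₂ (Function.update x 2 t)) (x 2))
    (hΥne : ∀ x ∈ U, Υ₂ x ≠ 0)
    (hh₄ne : ∀ x ∈ U, h₄ x ≠ 0)
    (hh₄s : ∀ x ∈ U, pdy h₄ x ≠ 0)
    (hφs : ∀ x ∈ U, pdy φ x ≠ 0)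
    (h₃ : (Fin 3 → ℝ) → ℝ)
    (hh₃def : ∀ x, h₃ x = pdy φ x * pdy h₄ x / (2 * Υ₂ x * h₄ x))
    (hgen : ∀ x ∈ U, Real.exp (2 * φ x) * |h₃ x * h₄ x| = (pdy h₄ x) ^ 2) :
    (∀ x ∈ U, h₃ x ≠ 0) ∧
    (∀ x ∈ U,
      pdy (pdy h₄) x - (pdy h₄ x) ^ 2 / (2 * h₄ x) -
        pdy h₃ x * pdy h₄ x / (2 * h₃ x) = 2 * h₃ x * h₄ x * Υ₂ x) ∧
    (∀ x ∈ U,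
      -(1 / (2 * h₃ x * h₄ x)) *
        (pdy (pdy h₄) x - (pdy h₄ x) ^ 2 / (2 * h₄ x) -
          pdy h₃ x * pdy h₄ x / (2 * h₃ x)) = -Υ₂ x) := by
  have h₃_ne : ∀ x ∈ U, h₃ x ≠ 0 := fun x hx => by
    have := hφs x hx; have := hh₄s x hx; have := hΥne x hx; have := hh₄ne x hx
    rw [hh₃def x]; positivity
  have vertical : ∀ x ∈ U, pdy (pdy h₄) x - (pdy h₄ x) ^ 2 / (2 * h₄ x) -
      pdy h₃ x * pdy h₄ x / (2 * h₃ x) = 2 * h₃ x * h₄ x * Υ₂ x := by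
    intro x hx
    have hline := hU.eventually_update_mem hx 2
    have := vertical_equation_line (H₃ := fun t => h₃ (Function.update x 2 t))
      (hφ.contDiffAt_update hU hx 2) (hh₄C.contDiffAt_update hU hx 2)
      ((hΥ x hx).differentiableAt one_ne_zero)
      (hline.mono fun t ht => hΥne _ ht) (hline.mono fun t ht => hh₄ne _ ht)
      (hφs x hx) (hh₄s x hx)
      (fun t => by simpa only [pdy_update] using hh₃def (Function.update x 2 t))
      (hline.mono fun t ht => by simpa only [pdy_update] using hgen _ ht)
    rw [pdy_pdy]
    simpa only [pdy, Function.update_eq_self] using this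
  refine ⟨h₃_ne, vertical, fun x hx => ?_⟩
  have := h₃_ne x hx
  have := hh₄ne x hx
  rw [vertical x hx]
  field_simp
end
end

section
/- Let Λ, s ∈ ℝ with Υ₂ := Λ − 4s² ≠ 0. Let U ⊆ ℝ³ be open with coordinates (x¹,x²,y³), write a* = ∂a/∂y³ and ∂_k = ∂/∂x^k for k ∈ {1,2}, and let φ : U → ℝ be C² with ∂₃φ nowhere zero. Define h₄ := e^{2φ}/(4Υ₂), h₃ := (∂₃φ)²/Υ₂, w_k := ∂_kφ/∂₃φ (k = 1,2), and let n₁, n₂ be arbitrary C² functions of (x¹,x²) alone. Then on U the following hold: (i) −(1/(2h₃h₄)) [ h₄** − (h₄*)²/(2h₄) − h₃* h₄*/(2h₃) ] = −Υ₂; (ii) for k = 1,2: (w_k/(2h₄)) [ h₄** − (h₄*)²/(2h₄) − h₃* h₄*/(2h₃) ] + (h₄*/(4h₄)) ( ∂_k h₃/h₃ + ∂_k h₄/h₄ ) − ∂_k(h₄*)/(2h₄) = 0; (iii) for k = 1,2: (h₄/(2h₃)) n_k** + ( (h₄/h₃) h₃* − (3/2) h₄* ) · n_k*/(2h₃) =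 0. -/
/-!
Since `h₄* = 2 φ* h₄` and `h₃* = 2 φ* φ** / Υ₂`, the bracket
`h₄** - (h₄*)² / (2 h₄) - h₃* h₄* / (2 h₃)` collapses to `2 (φ*)² h₄ = 2 Υ₂ h₃ h₄`. Equations (i)
and (ii) are then identities between rational expressions in the first and second derivatives
of `φ`, with denominators nonzero because `φ* ≠ 0`. Equation (iii) holds because `n_k` does not
depend on `y³`.
-/

noncomputable section

/-- Partial derivative `∂_i` on `ℝ³` (coordinates `(x¹,x²,y³)` indexed by `0,1,2`);
`pd 2 a = a*`, `pd (ix k) a = ∂_k a` for `k ∈ {1,2}`. -/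
def pd (i : Fin 3) (f : (Fin 3 → ℝ) → ℝ) : (Fin 3 → ℝ) → ℝ :=
  fun x => fderiv ℝ f x (Pi.single i 1)

/-- Embedding of horizontal indices `{1,2}` into `Fin 3` (as `0,1`). -/
def ix (k : Fin 2) : Fin 3 := ⟨k.1, by omega⟩

open Filter Topology Real

section PartialDerivative

variable {f g : (Fin 3 → ℝ) → ℝ} {x : Fin 3 → ℝ}

theorem pd_eq_zero_of_forall_add_smul_single {i : Fin 3}
    (hf : ∀ t : ℝ, f (x + t • Pi.single i 1) = f x) : pd i f x = 0 := by
  by_cases hd : DifferentiableAt ℝ f x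
  · simp [pd, ← hd.lineDeriv_eq_fderiv, lineDeriv, hf]
  · simp [pd, fderiv_zero_of_not_differentiableAt hd]

theorem pd_congr_of_eventuallyEq (h : f =ᶠ[𝓝 x] g) (i : Fin 3) : pd i f x = pd i g x := by
  simp only [pd, h.fderiv_eq]

theorem pd_mul (hf : DifferentiableAt ℝ f x) (hg : DifferentiableAt ℝ g x) (i : Fin 3) :
    pd i (fun y => f y * g y) x = pd i f x * g x + f x * pd i g x := by
  simp only [pd, fderiv_fun_mul hf hg, add_apply, smul_apply, smul_eq_mul]
  ring

theorem pd_comp_of_hasDerivAt {u : ℝ → ℝ} {u' : ℝ} (hu : HasDerivAt u u' (f x))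
    (hf : DifferentiableAt ℝ f x) (i : Fin 3) :
    pd i (fun y => u (f y)) x = u' * pd i f x := by
  change fderiv ℝ (u ∘ f) x _ = _
  rw [(hu.comp_hasFDerivAt x hf.hasFDerivAt).fderiv]
  rfl

theorem ContDiffAt.differentiableAt_pd (hf : ContDiffAt ℝ 2 f x) (i : Fin 3) :
    DifferentiableAt ℝ (pd i f) x :=
  ((hf.fderiv_right (m := 1) (by norm_num)).differentiableAt one_ne_zero).clm_apply
    (differentiableAt_const _)

theorem pd_two_comp_horizontal_eq_zero (m : (Fin 2 → ℝ) → ℝ) :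
    pd 2 (fun x => m fun i => x (ix i)) = 0 := by
  funext x
  refine pd_eq_zero_of_forall_add_smul_single fun t => ?_
  congr 1
  ext i
  simp [ix, Pi.single_apply, Fin.ext_iff]
  omega

end PartialDerivative

section Potentials

variable {φ : (Fin 3 → ℝ) → ℝ} {x : Fin 3 → ℝ}

theorem pd_exp_two_mul_div (c : ℝ) (hφ : DifferentiableAt ℝ φ x) (i : Fin 3) :
    pd i (fun y => exp (2 * φ y) / c) x = 2 * pd i φ x * (exp (2 * φ x) / c) := by
  have hu : HasDerivAt (fun u => exp (2 * u) / c) (exp (2 * φ x) * (2 * 1) / c) (φ x) :=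
    (((hasDerivAt_id _).const_mul 2).exp).div_const c
  rw [pd_comp_of_hasDerivAt hu hφ]
  ring

theorem pd_sq_div (c : ℝ) {f : (Fin 3 → ℝ) → ℝ} (hf : DifferentiableAt ℝ f x) (i : Fin 3) :
    pd i (fun y => f y ^ 2 / c) x = 2 * f x * pd i f x / c := by
  rw [pd_comp_of_hasDerivAt ((hasDerivAt_pow 2 (f x)).div_const c) hf]
  ring

theorem pd_pd_exp_two_mul_div (c : ℝ) (hφ : ContDiffAt ℝ 2 φ x) (i j : Fin 3) :
    pd j (pd i (fun y => exp (2 * φ y) / c)) x =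
      2 * pd j (pd i φ) x * (exp (2 * φ x) / c) +
        2 * pd i φ x * (2 * pd j φ x * (exp (2 * φ x) / c)) := by
  have hfirst : pd i (fun y => exp (2 * φ y) / c) =ᶠ[𝓝 x]
      fun y => 2 * pd i φ y * (exp (2 * φ y) / c) := by
    filter_upwards [hφ.eventually (by simp)] with y hy
    exact pd_exp_two_mul_div c (hy.differentiableAt two_ne_zero) i
  have hd : DifferentiableAt ℝ φ x := hφ.differentiableAt two_ne_zero
  rw [pd_congr_of_eventuallyEq hfirst, pd_mul ((hφ.differentiableAt_pd i).const_mul 2)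
    (by fun_prop), pd_exp_two_mul_div c hd,
    pd_comp_of_hasDerivAt (u := fun t => 2 * t) ((hasDerivAt_id' _).const_mul 2)
    (hφ.differentiableAt_pd i)]
  ring

end Potentials

theorem offdiagonal_solution_constant_source_general
    (Υ₂ : ℝ) (hΥne : Υ₂ ≠ 0)
    (U : Set (Fin 3 → ℝ)) (hU : IsOpen U)
    (φ : (Fin 3 → ℝ) → ℝ) (hφ : ContDiffOn ℝ 2 φ U)
    (hφs : ∀ x ∈ U, pd 2 φ x ≠ 0)
    (h₃ h₄ : (Fin 3 → ℝ) → ℝ)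
    (hd4 : ∀ x, h₄ x = Real.exp (2 * φ x) / (4 * Υ₂))
    (hd3 : ∀ x, h₃ x = (pd 2 φ x) ^ 2 / Υ₂)
    (w : Fin 2 → (Fin 3 → ℝ) → ℝ)
    (hw : ∀ k x, w k x = pd (ix k) φ x / pd 2 φ x)
    (m : Fin 2 → (Fin 2 → ℝ) → ℝ)
    (n : Fin 2 → (Fin 3 → ℝ) → ℝ)
    (hn : ∀ k x, n k x = m k (fun i => x (ix i))) :
    (∀ x ∈ U,
      -(1 / (2 * h₃ x * h₄ x)) *
        (pd 2 (pd 2 h₄) x - (pd 2 h₄ x) ^ 2 / (2 * h₄ x) -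
          pd 2 h₃ x * pd 2 h₄ x / (2 * h₃ x)) = -Υ₂) ∧
    (∀ x ∈ U, ∀ k : Fin 2,
      w k x / (2 * h₄ x) *
          (pd 2 (pd 2 h₄) x - (pd 2 h₄ x) ^ 2 / (2 * h₄ x) -
            pd 2 h₃ x * pd 2 h₄ x / (2 * h₃ x)) +
        pd 2 h₄ x / (4 * h₄ x) * (pd (ix k) h₃ x / h₃ x + pd (ix k) h₄ x / h₄ x) -
        pd (ix k) (pd 2 h₄) x / (2 * h₄ x) = 0) ∧
    (∀ x ∈ U, ∀ k : Fin 2,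
      h₄ x / (2 * h₃ x) * pd 2 (pd 2 (n k)) x +
        (h₄ x / h₃ x * pd 2 h₃ x - 3 / 2 * pd 2 h₄ x) * pd 2 (n k) x / (2 * h₃ x) = 0) := by
  obtain rfl : h₄ = fun y => exp (2 * φ y) / (4 * Υ₂) := funext hd4
  obtain rfl : h₃ = fun y => pd 2 φ y ^ 2 / Υ₂ := funext hd3
  have hφU : ∀ x ∈ U, ContDiffAt ℝ 2 φ x := fun x hx => hφ.contDiffAt (hU.mem_nhds hx)
  refine ⟨fun x hx => ?_, fun x hx k => ?_, fun x _ k => ?_⟩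
  · have hφx := hφU x hx
    have hφsx := hφs x hx
    simp only [pd_pd_exp_two_mul_div _ hφx,
      pd_exp_two_mul_div _ (hφx.differentiableAt two_ne_zero),
      pd_sq_div _ (hφx.differentiableAt_pd 2)]
    field_simp
    ring
  · have hφx := hφU x hx
    have hφsx := hφs x hx
    simp only [hw, pd_pd_exp_two_mul_div _ hφx,
      pd_exp_two_mul_div _ (hφx.differentiableAt two_ne_zero),
      pd_sq_div _ (hφx.differentiableAt_pd 2)]
    field_simp
    ring
  · have hn0 : pd 2 (n k) = 0 := by
      rw [show n k = _ from funext (hn k)]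
      exact pd_two_comp_horizontal_eq_zero (m k)
    rw [hn0]
    simp [pd]

/-- Verification of the solution-generating theorem with constant effective source
`Υ₂ = Λ − 4s² ≠ 0`: for `h₄ = e^{2φ}/(4Υ₂)`, `h₃ = (φ*)²/Υ₂`, `w_k = ∂_kφ/φ*` and any
`n_k = n_k(x¹,x²)`, the vertical and mixed decoupled Einstein equations hold. -/
theorem offdiagonal_solution_constant_source
    (Λ s Υ₂ : ℝ) (hΥdef : Υ₂ = Λ - 4 * s ^ 2) (hΥne : Υ₂ ≠ 0)
    (U : Set (Fin 3 → ℝ)) (hU : IsOpen U)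
    (φ : (Fin 3 → ℝ) → ℝ) (hφ : ContDiffOn ℝ 2 φ U)
    (hφs : ∀ x ∈ U, pd 2 φ x ≠ 0)
    (h₃ h₄ : (Fin 3 → ℝ) → ℝ)
    (hd4 : ∀ x, h₄ x = Real.exp (2 * φ x) / (4 * Υ₂))
    (hd3 : ∀ x, h₃ x = (pd 2 φ x) ^ 2 / Υ₂)
    (w : Fin 2 → (Fin 3 → ℝ) → ℝ)
    (hw : ∀ k x, w k x = pd (ix k) φ x / pd 2 φ x)
    (m : Fin 2 → (Fin 2 → ℝ) → ℝ) (hm : ∀ k, ContDiff ℝ 2 (m k))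
    (n : Fin 2 → (Fin 3 → ℝ) → ℝ)
    (hn : ∀ k x, n k x = m k (fun i => x (ix i))) :
    (∀ x ∈ U,
      -(1 / (2 * h₃ x * h₄ x)) *
        (pd 2 (pd 2 h₄) x - (pd 2 h₄ x) ^ 2 / (2 * h₄ x) -
          pd 2 h₃ x * pd 2 h₄ x / (2 * h₃ x)) = -Υ₂) ∧
    (∀ x ∈ U, ∀ k : Fin 2,
      w k x / (2 * h₄ x) *
          (pd 2 (pd 2 h₄) x - (pd 2 h₄ x) ^ 2 / (2 * h₄ x) -
            pd 2 h₃ x * pd 2 h₄ x / (2 * h₃ x)) +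
        pd 2 h₄ x / (4 * h₄ x) * (pd (ix k) h₃ x / h₃ x + pd (ix k) h₄ x / h₄ x) -
        pd (ix k) (pd 2 h₄) x / (2 * h₄ x) = 0) ∧
    (∀ x ∈ U, ∀ k : Fin 2,
      h₄ x / (2 * h₃ x) * pd 2 (pd 2 (n k)) x +
        (h₄ x / h₃ x * pd 2 h₃ x - 3 / 2 * pd 2 h₄ x) * pd 2 (n k) x / (2 * h₃ x) = 0) :=
  offdiagonal_solution_constant_source_general Υ₂ hΥne U hU φ hφ hφs h₃ h₄ hd4 hd3 w hw m n hn
end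
end
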